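/- arXiv:2208.03303 — 5 statements merged into one kernel-verified Lean document; each statement's English description precedes it below -/
import Mathlib

section
/- Let L and L' be free abelian groups of finite rank n and let f : L' → L be an injective homomorphism with finite cokernel. Then the finite abelian group L / f(L') is isomorphic to Hom( Hom(L, ℤ) / f^⊤(Hom(L', ℤ)), ℂˣ ), where f^⊤ : Hom(L,ℤ) → Hom(L',ℤ) is the transpose map precomposition with f. -/
/-!
Let `e = |L / f L'|`. As `e` kills the cokernel and `f` is injective, there is `μ : L → L'` with
`f ∘ μ = e` and `μ ∘ f = e`, i.e. `μ = e f⁻¹`. For a primitive `e`-th root of unity `ζ`, a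
functional `φ` on `L'` defines the character `x ↦ ζ ^ φ (μ x)` of `L / f L'`, a discrete form of
`x ↦ exp (2πi φ (f⁻¹ x))`. Its kernel consists of the `ψ ∘ f`, with `ψ = φ ∘ μ / e`; it is onto
because, `L` being free, a character `χ` lifts to `ψ : L → ℤ` with `χ = ζ ^ ψ`, and then `ψ ∘ f`
is divisible by `e`. So `coker f^⊤ ≅ Hom (L / f L', ℂˣ)`, and since a finite abelian group is
(noncanonically) isomorphic to its character group, `L / f L' ≅ coker f^⊤ ≅ Hom (coker f^⊤, ℂˣ)`.
-/

namespace LinearMap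

variable {R M N P : Type*} [Semiring R] [AddCommMonoid M] [AddCommMonoid N] [AddCommMonoid P]
  [Module R M] [Module R N] [Module R P] {f : N →ₗ[R] M} {g : P →ₗ[R] M}

theorem exists_comp_eq_of_injective_of_range_le (hf : Function.Injective f)
    (h : range g ≤ range f) : ∃ g' : P →ₗ[R] N, f ∘ₗ g' = g :=
  ⟨(LinearEquiv.ofInjective f hf).symm.toLinearMap ∘ₗ g.codRestrict _ fun x => h ⟨x, rfl⟩,
    ext fun x => by simp [← LinearEquiv.ofInjective_apply f (h := hf)]⟩

end LinearMap

theorem Module.Projective.exists_comp_eq_of_range_le {R M N P : Type*} [Ring R]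
    [AddCommGroup M] [AddCommGroup N] [AddCommGroup P] [Module R M] [Module R N] [Module R P]
    [Module.Projective R P] {f : N →ₗ[R] M} {g : P →ₗ[R] M}
    (h : LinearMap.range g ≤ LinearMap.range f) : ∃ g' : P →ₗ[R] N, f ∘ₗ g' = g := by
  obtain ⟨g', hg'⟩ := Module.projective_lifting_property f.rangeRestrict
    (g.codRestrict _ fun x => h ⟨x, rfl⟩) f.surjective_rangeRestrict
  exact ⟨g', LinearMap.ext fun x => congr_arg Subtype.val (LinearMap.congr_fun hg' x)⟩

theorem Module.Dual.exists_smul_eq_of_forall_dvd {M : Type*} [AddCommGroup M] [Module ℤ M]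
    {e : ℤ} (he : e ≠ 0) {φ : Module.Dual ℤ M} (h : ∀ x, e ∣ φ x) :
    ∃ ψ : Module.Dual ℤ M, e • ψ = φ := by
  obtain ⟨ψ, hψ⟩ := LinearMap.exists_comp_eq_of_injective_of_range_le
    (f := LinearMap.lsmul ℤ ℤ e) (smul_right_injective ℤ he)
    (by rintro _ ⟨x, rfl⟩; exact (h x).imp fun k hk => hk.symm)
  exact ⟨ψ, LinearMap.ext fun x => LinearMap.congr_fun hψ x⟩

section Characters

variable {G : Type*} [CommGroup G] {ζ : G} {e : ℕ}

noncomputable def zpowChar (ζ : G) : ℤ →ₗ[ℤ] Additive G :=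
  (zmultiplesHom (Additive G) (Additive.ofMul ζ)).toIntLinearMap

@[simp]
theorem zpowChar_apply (ζ : G) (n : ℤ) : zpowChar ζ n = Additive.ofMul (ζ ^ n) := rfl

theorem IsPrimitiveRoot.zpowChar_eq_zero_iff (hζ : IsPrimitiveRoot ζ e) {n : ℤ} :
    zpowChar ζ n = 0 ↔ (e : ℤ) ∣ n := by
  rw [zpowChar_apply, ← ofMul_one, Additive.ofMul.apply_eq_iff_eq, hζ.zpow_eq_one_iff_dvd]

theorem IsPrimitiveRoot.mem_range_zpowChar {R : Type*} [CommRing R] [IsDomain R] [NeZero e]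
    {ζ : Rˣ} (hζ : IsPrimitiveRoot ζ e) {a : Additive Rˣ} (ha : e • a = 0) :
    a ∈ LinearMap.range (zpowChar ζ) := by
  have : a.toMul ∈ Subgroup.zpowers ζ := by
    rw [hζ.zpowers_eq, mem_rootsOfUnity, ← toMul_nsmul, ha, toMul_zero]
  obtain ⟨k, hk⟩ := Subgroup.mem_zpowers_iff.mp this
  exact ⟨k, congrArg Additive.ofMul hk⟩

end Characters

section DualCokernel

open LinearMap Submodule

variable {L L' : Type*} [AddCommGroup L] [Module ℤ L] [AddCommGroup L'] [Module ℤ L']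
  {f : L' →ₗ[ℤ] L} {μ : L →ₗ[ℤ] L'} {e : ℕ}

noncomputable def dualToCharacters {G : Type*} [CommGroup G] {ζ : G} (hζ : ζ ^ e = 1)
    (hμf : ∀ y, μ (f y) = e • y) :
    Module.Dual ℤ L' →ₗ[ℤ] (L ⧸ range f →+ Additive G) where
  toFun φ := ((range f).liftQ (zpowChar ζ ∘ₗ φ ∘ₗ μ) (by
    rintro _ ⟨y, rfl⟩
    simp [hμf, zpow_mul, hζ])).toAddMonoidHom
  map_add' φ ψ := by
    ext q
    induction q using Submodule.Quotient.induction_on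
    simp [zpow_add]
  map_smul' c φ := by
    ext q
    induction q using Submodule.Quotient.induction_on
    simp [zpow_mul']

@[simp]
theorem dualToCharacters_mk {G : Type*} [CommGroup G] {ζ : G} (hζ : ζ ^ e = 1)
    (hμf : ∀ y, μ (f y) = e • y) (φ : Module.Dual ℤ L') (x : L) :
    dualToCharacters hζ hμf φ (Submodule.Quotient.mk x) = Additive.ofMul (ζ ^ φ (μ x)) :=
  rfl

theorem ker_dualToCharacters [NeZero e] (hfμ : ∀ x, f (μ x) = e • x)
    (hμf : ∀ y, μ (f y) = e • y) {G : Type*} [CommGroup G] {ζ : G} (hζ : IsPrimitiveRoot ζ e) :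
    ker (dualToCharacters hζ.pow_eq_one hμf) = range (Module.Dual.transpose (R := ℤ) f) := by
  have he : (e : ℤ) ≠ 0 := by exact_mod_cast NeZero.ne e
  ext φ
  constructor
  · intro hφ
    have hdvd (x : L) : (e : ℤ) ∣ φ (μ x) := by
      rw [← hζ.zpowChar_eq_zero_iff]
      exact congr($hφ (Submodule.Quotient.mk x))
    obtain ⟨ψ, hψ⟩ := Module.Dual.exists_smul_eq_of_forall_dvd he (φ := φ ∘ₗ μ) hdvd
    refine ⟨ψ, LinearMap.ext fun y => mul_left_cancel₀ he ?_⟩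
    simpa [Module.Dual.transpose_apply, hμf] using congr($hψ (f y))
  · rintro ⟨ψ, rfl⟩
    ext q
    induction q using Submodule.Quotient.induction_on
    simp [Module.Dual.transpose_apply, hfμ, zpow_mul, hζ.pow_eq_one]

theorem dualToCharacters_surjective [NeZero e] [Module.Free ℤ L] (hfμ : ∀ x, f (μ x) = e • x)
    (hμf : ∀ y, μ (f y) = e • y) {R : Type*} [CommRing R] [IsDomain R] {ζ : Rˣ}
    (hζ : IsPrimitiveRoot ζ e) : Function.Surjective (dualToCharacters hζ.pow_eq_one hμf) := by
  have he : (e : ℤ) ≠ 0 := by exact_mod_cast NeZero.ne e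
  intro χ
  let χL : L →ₗ[ℤ] Additive Rˣ :=
    { χ.comp (range f).mkQ.toAddMonoidHom with
      map_smul' := map_intCast_smul (χ.comp (range f).mkQ.toAddMonoidHom) ℤ ℤ }
  obtain ⟨ψ, hψ⟩ : ∃ ψ : Module.Dual ℤ L, zpowChar ζ ∘ₗ ψ = χL := by
    refine Module.Projective.exists_comp_eq_of_range_le ?_
    rintro _ ⟨x, rfl⟩
    refine hζ.mem_range_zpowChar ?_
    have hx : e • (Submodule.Quotient.mk x : L ⧸ range f) = 0 := by
      rw [← mkQ_apply, ← map_nsmul, ← hfμ, mkQ_apply, Submodule.Quotient.mk_eq_zero]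
      exact mem_range_self f _
    change e • χ (Submodule.Quotient.mk x) = 0
    rw [← map_nsmul, hx, map_zero]
  have hdvd (y : L') : (e : ℤ) ∣ ψ (f y) := by
    rw [← hζ.zpowChar_eq_zero_iff, ← LinearMap.comp_apply, hψ]
    simp [χL, (Submodule.Quotient.mk_eq_zero _).mpr (mem_range_self f y)]
  obtain ⟨φ, hφ⟩ := Module.Dual.exists_smul_eq_of_forall_dvd he (φ := ψ ∘ₗ f) hdvd
  refine ⟨φ, AddMonoidHom.ext fun q => ?_⟩
  induction q using Submodule.Quotient.induction_on with | _ x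
  have : φ (μ x) = ψ x := mul_left_cancel₀ he (by simpa [hfμ] using congr($hφ (μ x)))
  rw [dualToCharacters_mk, this]
  exact congr($hψ x)

noncomputable def dualCokernelEquivCharacters [NeZero e] [Module.Free ℤ L]
    (hfμ : ∀ x, f (μ x) = e • x) (hμf : ∀ y, μ (f y) = e • y) {R : Type*} [CommRing R]
    [IsDomain R] {ζ : Rˣ} (hζ : IsPrimitiveRoot ζ e) :
    (Module.Dual ℤ L' ⧸ range (Module.Dual.transpose (R := ℤ) f)) ≃ₗ[ℤ]
      (L ⧸ range f →+ Additive Rˣ) :=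
  (quotEquivOfEq _ _ (ker_dualToCharacters hfμ hμf hζ).symm).trans
    ((dualToCharacters hζ.pow_eq_one hμf).quotKerEquivOfSurjective
      (dualToCharacters_surjective hfμ hμf hζ))

end DualCokernel

theorem LinearMap.exists_comp_eq_card_quotient_smul {L L' : Type*} [AddCommGroup L]
    [Module ℤ L] [AddCommGroup L'] [Module ℤ L'] {f : L' →ₗ[ℤ] L} (hf : Function.Injective f)
    [Finite (L ⧸ range f)] :
    ∃ μ : L →ₗ[ℤ] L', (∀ x, f (μ x) = Nat.card (L ⧸ range f) • x) ∧
      ∀ y, μ (f y) = Nat.card (L ⧸ range f) • y := by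
  obtain ⟨μ, hμ⟩ := exists_comp_eq_of_injective_of_range_le hf
    (g := Nat.card (L ⧸ range f) • LinearMap.id) <| by
      rintro _ ⟨x, rfl⟩
      rw [← Submodule.Quotient.mk_eq_zero (range f), LinearMap.smul_apply, LinearMap.id_apply,
        ← Submodule.mkQ_apply, map_nsmul]
      exact card_nsmul_eq_zero'
  have hfμ (x : L) : f (μ x) = Nat.card (L ⧸ range f) • x := congr($hμ x)
  exact ⟨μ, hfμ, fun y => hf (by rw [hfμ, map_nsmul])⟩

theorem AddCommGroup.nonempty_addEquiv_additive_monoidHom_units (A : Type*) [AddCommGroup A]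
    [Finite A] : Nonempty (A ≃+ Additive (Multiplicative A →* ℂˣ)) := by
  have : NeZero (Monoid.exponent (Multiplicative A)) := ⟨Monoid.exponent_ne_zero_of_finite⟩
  obtain ⟨e⟩ := CommGroup.monoidHom_mulEquiv_of_hasEnoughRootsOfUnity (Multiplicative A) ℂ
  exact ⟨(AddEquiv.additiveMultiplicative A).symm.trans (MulEquiv.toAdditive e.symm)⟩

theorem cokernel_iso_char_group_of_dual_cokernel_general
    (L L' : Type*)
    [AddCommGroup L] [Module ℤ L] [Module.Free ℤ L]
    [AddCommGroup L'] [Module ℤ L']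
    (f : L' →ₗ[ℤ] L) (hf : Function.Injective f)
    (hcoker : Finite (L ⧸ LinearMap.range f)) :
    Nonempty ((L ⧸ LinearMap.range f) ≃+
      Additive (Multiplicative
        (Module.Dual ℤ L' ⧸ LinearMap.range (Module.Dual.transpose (R := ℤ) f)) →* ℂˣ)) := by
  set C := Module.Dual ℤ L' ⧸ LinearMap.range (Module.Dual.transpose (R := ℤ) f)
  obtain ⟨μ, hfμ, hμf⟩ := f.exists_comp_eq_card_quotient_smul hf
  have : NeZero (Nat.card (L ⧸ LinearMap.range f)) := ⟨Nat.card_pos.ne'⟩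
  obtain ⟨ζ, hζ⟩ := HasEnoughRootsOfUnity.exists_primitiveRoot ℂ (Nat.card (L ⧸ LinearMap.range f))
  obtain ⟨eQ⟩ := AddCommGroup.nonempty_addEquiv_additive_monoidHom_units (L ⧸ LinearMap.range f)
  let eCQ : C ≃+ L ⧸ LinearMap.range f :=
    ((dualCokernelEquivCharacters hfμ hμf (hζ.isUnit_unit (NeZero.ne _))).toAddEquiv.trans
      AddMonoidHom.toMultiplicativeLeftAddEquiv).trans eQ.symm
  have : Finite C := .of_equiv _ eCQ.symm.toEquiv
  obtain ⟨eC⟩ := AddCommGroup.nonempty_addEquiv_additive_monoidHom_units C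
  exact ⟨eCQ.symm.trans eC⟩

/-- Let `L` and `L'` be free abelian groups of finite rank `n` and `f : L' → L` an
injective homomorphism with finite cokernel.  Then `L / f(L')` is isomorphic to
`Hom( Hom(L,ℤ) / f^⊤(Hom(L',ℤ)), ℂˣ )`, where `f^⊤` is precomposition with `f`. -/
theorem cokernel_iso_char_group_of_dual_cokernel
    (n : ℕ) (L L' : Type*)
    [AddCommGroup L] [Module ℤ L] [Module.Free ℤ L]
    [AddCommGroup L'] [Module ℤ L'] [Module.Free ℤ L']
    (hL : Module.finrank ℤ L = n) (hL' : Module.finrank ℤ L' = n)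
    (f : L' →ₗ[ℤ] L) (hf : Function.Injective f)
    (hcoker : Finite (L ⧸ LinearMap.range f)) :
    Nonempty ((L ⧸ LinearMap.range f) ≃+
      Additive (Multiplicative
        (Module.Dual ℤ L' ⧸ LinearMap.range (Module.Dual.transpose (R := ℤ) f)) →* ℂˣ)) :=
  cokernel_iso_char_group_of_dual_cokernel_general L L' f hf hcoker
end

section
/- Let L be a finitely generated free abelian group (a lattice) with an involution σ : L → L (σ² = id). Then the torsion subgroup of the quotient L / (1−σ)L equals the image of the (−1)-eigenlattice L^{−σ} = {x ∈ L : σ(x) = −x} in L / (1−σ)L. -/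
/-!
If `n • x = y - σ y`, then applying `σ` gives `n • σ x = σ y - y`, so `n • (x + σ x) = 0`, and
`x + σ x = 0` because `L` is torsion-free. Conversely, if `σ x = -x` then `2 • x = x - σ x`.
-/

namespace LinearMap

variable {R M : Type*} [Ring R] [AddCommGroup M] [Module R M]

lemma apply_eq_neg_of_mem_range_id_sub {σ : M →ₗ[R] M} (hσ : ∀ x, σ (σ x) = x) {z : M}
    (hz : z ∈ range (id - σ)) : σ z = -z := by
  obtain ⟨y, rfl⟩ := hz
  simp [hσ]

lemma apply_eq_neg_of_nsmul [IsAddTorsionFree M] {σ : M →ₗ[R] M} {n : ℕ} (hn : n ≠ 0) {x : M}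
    (hx : σ (n • x) = -(n • x)) : σ x = -x := by
  rw [map_nsmul, ← smul_neg, nsmul_right_inj hn] at hx
  exact hx

lemma two_nsmul_mem_range_id_sub {σ : M →ₗ[R] M} {x : M} (hx : σ x = -x) :
    2 • x ∈ range (id - σ) :=
  ⟨x, by simp [hx, two_nsmul]⟩

end LinearMap

open LinearMap in
theorem torsion_of_quotient_eq_image_neg_eigenlattice_general
    (L : Type*) [AddCommGroup L] [Module ℤ L] [Module.Free ℤ L]
    (σ : L →ₗ[ℤ] L) (hσ : ∀ x, σ (σ x) = x)
    (q : L ⧸ LinearMap.range (LinearMap.id - σ)) :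
    (∃ n : ℕ, 0 < n ∧ n • q = 0) ↔
      ∃ x : L, σ x = -x ∧ Submodule.Quotient.mk x = q := by
  have : IsAddTorsionFree L := .of_isTorsionFree ℤ L
  constructor
  · rintro ⟨n, hn, hnq⟩
    obtain ⟨x, rfl⟩ := Submodule.Quotient.mk_surjective _ q
    have hnx : n • x ∈ range (LinearMap.id - σ) := by
      rwa [← Submodule.Quotient.mk_eq_zero, Submodule.Quotient.mk_smul]
    exact ⟨x, apply_eq_neg_of_nsmul hn.ne' (apply_eq_neg_of_mem_range_id_sub hσ hnx), rfl⟩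
  · rintro ⟨x, hx, rfl⟩
    refine ⟨2, two_pos, ?_⟩
    rw [← Submodule.Quotient.mk_smul, Submodule.Quotient.mk_eq_zero]
    exact two_nsmul_mem_range_id_sub hx

/-- Let `L` be a lattice (finitely generated free abelian group) with an involution `σ`.
The torsion subgroup of `L/(1−σ)L` equals the image of the `(−1)`-eigenlattice
`L^{−σ} = {x ∈ L : σ x = −x}` in `L/(1−σ)L`: a class `q` is torsion iff it is
represented by an element negated by `σ`. -/
theorem torsion_of_quotient_eq_image_neg_eigenlattice
    (L : Type*) [AddCommGroup L] [Module ℤ L] [Module.Free ℤ L] [Module.Finite ℤ L]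
    (σ : L →ₗ[ℤ] L) (hσ : ∀ x, σ (σ x) = x)
    (q : L ⧸ LinearMap.range (LinearMap.id - σ)) :
    (∃ n : ℕ, 0 < n ∧ n • q = 0) ↔
      ∃ x : L, σ x = -x ∧ Submodule.Quotient.mk x = q :=
  torsion_of_quotient_eq_image_neg_eigenlattice_general L σ hσ q
end

section
/- Let T be a complex algebraic torus with involution θ, and let β be a character of T fixed by θ (β ∘ θ = β) with coroot β^∨ satisfying θ ∘ β^∨ = β^∨ and ⟨β, β^∨⟩ = 2. Then the subgroup (1+θ)(ker β) = { t·θ(t) : t ∈ T, β(t) = 1 } of T is connected. -/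
/-- The complex torus `T = (ℂˣ)^n`. -/
abbrev Torus (n : ℕ) := Fin n → ℂˣ

/-- The algebraic character of `T = (ℂˣ)^n` with exponent vector `k ∈ X*(T) = ℤ^n`. -/
def torusChar {n : ℕ} (k : Fin n → ℤ) : Torus n →* ℂˣ where
  toFun t := ∏ i, (t i) ^ (k i)
  map_one' := by simp
  map_mul' s t := by
    simp [Pi.mul_apply, mul_zpow, Finset.prod_mul_distrib]

/-- The algebraic cocharacter of `T = (ℂˣ)^n` with exponent vector `c ∈ X_*(T) = ℤ^n`. -/
def torusCochar {n : ℕ} (c : Fin n → ℤ) : ℂˣ →* Torus n where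
  toFun z := fun i => z ^ (c i)
  map_one' := by funext i; simp
  map_mul' z w := by funext i; simp [mul_zpow]

/-- `exp` as a map into `ℂˣ`. -/
noncomputable def cexpU (z : ℂ) : ℂˣ := Units.mk0 (Complex.exp z) (Complex.exp_ne_zero z)

@[simp] lemma cexpU_val (z : ℂ) : (cexpU z : ℂ) = Complex.exp z := rfl

lemma continuous_cexpU : Continuous cexpU := by
  rw [Units.continuous_iff]
  constructor
  · exact Complex.continuous_exp
  · have heq : (fun z : ℂ => (((cexpU z)⁻¹ : ℂˣ) : ℂ)) = fun z => Complex.exp (-z) := by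
      funext z
      rw [Units.val_inv_eq_inv_val, cexpU_val]
      exact (Complex.exp_neg z).symm
    rw [heq]
    exact Complex.continuous_exp.comp continuous_neg

/-- Let `θ` be an algebraic involution of the torus `T = (ℂˣ)^n`, and `β = torusChar k`
a `θ`-fixed character with `θ`-fixed coroot `β^∨ = torusCochar c`, `⟨β,β^∨⟩ = 2`.
Then the subgroup `(1+θ)(ker β) = { t·θ(t) : β(t) = 1 }` of `T` is connected. -/
theorem one_plus_theta_of_kernel_connected
    (n : ℕ) (θ : Torus n →* Torus n) (hcont : Continuous θ) (hθ : ∀ t, θ (θ t) = t)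
    (k c : Fin n → ℤ)
    (hβθ : ∀ t, torusChar k (θ t) = torusChar k t)
    (hθc : ∀ z : ℂˣ, θ (torusCochar c z) = torusCochar c z)
    (hpair : ∑ i, c i * k i = 2) :
    IsConnected ((fun t => t * θ t) '' {t : Torus n | torusChar k t = 1}) := by
  set f : Torus n → Torus n := fun t => t * θ t with hf
  have hfc : Continuous f := continuous_id.mul hcont
  set F := f '' {t : Torus n | torusChar k t = 1} with hF
  have h1 : (1 : Torus n) ∈ F := ⟨1, by simp, by simp [f]⟩
  apply IsPathConnected.isConnected
  refine ⟨1, h1, ?_⟩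
  rintro y ⟨t, ht, rfl⟩
  -- choose logarithms
  have hsurj : ∀ i, ∃ w : ℂ, Complex.exp w = (t i : ℂ) := by
    intro i
    have : ((t i : ℂ)) ∈ Set.range Complex.exp := by
      rw [Complex.range_exp]; exact (t i).ne_zero
    exact this
  choose w hw using hsurj
  -- χ(t) = 1 gives ∑ k i * w i = m * 2πI
  have hsum : Complex.exp (∑ i, (k i : ℂ) * w i) = 1 := by
    have := ht
    simp only [Set.mem_setOf_eq, torusChar, MonoidHom.coe_mk, OneHom.coe_mk] at this
    have hval : ((∏ i, (t i) ^ (k i) : ℂˣ) : ℂ) = 1 := by rw [this]; rfl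
    rw [Complex.exp_sum]
    calc ∏ i, Complex.exp ((k i : ℂ) * w i)
        = ∏ i, ((t i : ℂ)) ^ (k i) := by
          refine Finset.prod_congr rfl fun i _ => ?_
          rw [Complex.exp_int_mul, hw]
      _ = 1 := by
          rw [← hval]
          push_cast [Units.coe_prod]
          rfl
  obtain ⟨m, hm⟩ := Complex.exp_eq_one_iff.mp hsum
  -- the path in ker β
  set a : ℝ → Fin n → ℂ := fun s i =>
    (s : ℂ) * w i + (1 - (s : ℂ)) * ((m : ℂ) * (Real.pi : ℂ) * Complex.I) * (c i : ℂ) with ha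
  set γ : ℝ → Torus n := fun s i => cexpU (a s i) with hγ
  have hγcont : Continuous γ := by
    apply continuous_pi
    intro i
    apply continuous_cexpU.comp
    fun_prop
  have hγker : ∀ s, torusChar k (γ s) = 1 := by
    intro s
    apply Units.ext
    simp only [torusChar, MonoidHom.coe_mk, OneHom.coe_mk, Units.coe_prod, Units.val_one]
    have : ∀ i, ((γ s i) ^ (k i) : ℂˣ) = cexpU ((k i : ℂ) * a s i) := by
      intro i
      apply Units.ext
      simp [γ, Complex.exp_int_mul]
    calc ∏ i, (((γ s i) ^ (k i) : ℂˣ) : ℂ)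
        = Complex.exp (∑ i, (k i : ℂ) * a s i) := by
          rw [Complex.exp_sum]
          exact Finset.prod_congr rfl fun i _ => by rw [this i]; rfl
      _ = 1 := by
          have hexpand : (∑ i, (k i : ℂ) * a s i)
              = (s:ℂ) * (∑ i, (k i : ℂ) * w i)
                + (1 - (s:ℂ)) * ((m : ℂ) * (Real.pi : ℂ) * Complex.I) * (∑ i, (c i : ℂ) * (k i : ℂ)) := by
            simp only [a, Finset.mul_sum, ← Finset.sum_add_distrib]
            refine Finset.sum_congr rfl fun i _ => by ring
          have hck : (∑ i, (c i : ℂ) * (k i : ℂ)) = 2 := by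
            have h2 := congrArg (fun z : ℤ => (z : ℂ)) hpair
            push_cast at h2
            exact h2
          rw [hexpand, hm, hck]
          have : (s:ℂ) * ((m:ℂ) * (2 * (Real.pi:ℂ) * Complex.I))
              + (1 - (s:ℂ)) * ((m : ℂ) * (Real.pi : ℂ) * Complex.I) * 2
              = (m:ℂ) * (2 * (Real.pi:ℂ) * Complex.I) := by ring
          rw [this, Complex.exp_int_mul_two_pi_mul_I]
  -- endpoints
  have hγ1 : γ 1 = t := by
    funext i
    apply Units.ext
    simp [γ, a, hw]
  have hγ0 : f (γ 0) = 1 := by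
    have h0 : γ 0 = torusCochar c (cexpU ((m : ℂ) * (Real.pi : ℂ) * Complex.I)) := by
      funext i
      apply Units.ext
      have hr : (((torusCochar c (cexpU ((m : ℂ) * (Real.pi : ℂ) * Complex.I))) i : ℂˣ) : ℂ)
          = Complex.exp ((c i : ℂ) * ((m : ℂ) * (Real.pi : ℂ) * Complex.I)) := by
        rw [Complex.exp_int_mul]
        exact Units.val_zpow_eq_zpow_val _ _
      rw [hr]
      show Complex.exp (a 0 i) = _
      congr 1
      simp [a]
      ring
    have hθ0 : θ (γ 0) = γ 0 := by rw [h0, hθc]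
    have : f (γ 0) = γ 0 * γ 0 := by simp [f, hθ0]
    rw [this, h0, ← map_mul]
    have hz : (cexpU ((m : ℂ) * (Real.pi : ℂ) * Complex.I))
        * (cexpU ((m : ℂ) * (Real.pi : ℂ) * Complex.I)) = 1 := by
      apply Units.ext
      have : Complex.exp ((m : ℂ) * (Real.pi : ℂ) * Complex.I)
          * Complex.exp ((m : ℂ) * (Real.pi : ℂ) * Complex.I)
          = Complex.exp ((m:ℂ) * (2 * (Real.pi:ℂ) * Complex.I)) := by
        rw [← Complex.exp_add]; ring_nf
      simpa [this] using Complex.exp_int_mul_two_pi_mul_I m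
    rw [hz, map_one]
  -- build the path
  refine ⟨⟨⟨fun s => f (γ s), by
      exact (hfc.comp hγcont).comp continuous_subtype_val⟩, ?_, ?_⟩, ?_⟩
  · simpa using hγ0
  · simp [hγ1]
  · intro s
    exact ⟨γ s, hγker s, rfl⟩
end

section
/- Let T be a complex algebraic torus with involution θ and β a θ-fixed character with coroot β^∨ (θβ^∨ = β^∨, ⟨β,β^∨⟩ = 2). If t ∈ T satisfies β(t) = −1, then t·θ(t) ∈ (1+θ)(ker β) · ⟨β^∨(−1)⟩; consequently ker(β restricted to (T^θ)⁰) = (1+θ)(ker β) · ⟨β^∨(−1)⟩, where (T^θ)⁰ = (1+θ)T. -/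
namespace MonoidHom

variable {G R : Type*} [CommGroup G]

def onePlus (θ : G →* G) : G →* G := MonoidHom.id G * θ

@[simp]
lemma onePlus_apply (θ : G →* G) (t : G) : onePlus θ t = t * θ t := rfl

variable [CommRing R] {θ : G →* G} {β : G →* Rˣ} {φ : Rˣ →* G}

lemma onePlus_mul_of_map_eq_self (hθφ : ∀ z, θ (φ z) = φ z) (t : G) (z : Rˣ) :
    onePlus θ (t * φ z) = onePlus θ t * φ (z ^ 2) := by
  rw [map_mul, onePlus_apply (t := φ z), hθφ, ← map_mul, ← sq]

lemma map_onePlus_of_map_eq_self (hβθ : ∀ t, β (θ t) = β t) (t : G) :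
    β (onePlus θ t) = β t ^ 2 := by
  rw [onePlus_apply, map_mul, hβθ, sq]

lemma eq_one_or_eq_neg_one_of_map_onePlus_eq_one [IsDomain R] (hβθ : ∀ t, β (θ t) = β t)
    {t : G} (ht : β (onePlus θ t) = 1) : β t = 1 ∨ β t = -1 := by
  rw [map_onePlus_of_map_eq_self hβθ, Units.ext_iff, Units.val_pow_eq_pow_val, Units.val_one,
    sq_eq_one_iff] at ht
  simpa only [Units.ext_iff, Units.val_one, Units.val_neg] using ht

lemma map_onePlus_mul_map_neg_one_zpow (hβθ : ∀ t, β (θ t) = β t)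
    (hβφ : ∀ z, β (φ z) = z ^ 2) {s : G} (hs : β s = 1) (m : ℤ) :
    β (onePlus θ s * φ (-1) ^ m) = 1 := by
  rw [map_mul, map_onePlus_of_map_eq_self hβθ, hs, map_zpow, hβφ, one_pow, one_mul, neg_one_sq,
    one_zpow]

variable {ι : Rˣ}

lemma exists_onePlus_eq_of_map_eq_neg_one (hι : ι ^ 2 = -1) (hβφ : ∀ z, β (φ z) = z ^ 2)
    (hθφ : ∀ z, θ (φ z) = φ z) {t : G} (ht : β t = -1) :
    ∃ s, β s = 1 ∧ onePlus θ t = onePlus θ s * φ (-1) ^ (-1 : ℤ) := by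
  refine ⟨t * φ ι, by rw [map_mul, ht, hβφ, hι, neg_one_mul, neg_neg], ?_⟩
  rw [onePlus_mul_of_map_eq_self hθφ, hι, zpow_neg_one, mul_inv_cancel_right]

lemma onePlus_mul_map_neg_one_zpow (hι : ι ^ 2 = -1) (hθφ : ∀ z, θ (φ z) = φ z)
    (s : G) (m : ℤ) :
    onePlus θ s * φ (-1) ^ m = onePlus θ (s * φ (ι ^ m)) := by
  rw [onePlus_mul_of_map_eq_self hθφ, sq (ι ^ m), ← mul_zpow, ← sq, hι, map_zpow]

lemma mem_range_onePlus_inf_ker_iff [IsDomain R] (hι : ι ^ 2 = -1) (hβθ : ∀ t, β (θ t) = β t)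
    (hβφ : ∀ z, β (φ z) = z ^ 2) (hθφ : ∀ z, θ (φ z) = φ z) (x : G) :
    (∃ t, x = onePlus θ t) ∧ β x = 1 ↔ ∃ s, ∃ m : ℤ, β s = 1 ∧ x = onePlus θ s * φ (-1) ^ m := by
  constructor
  · rintro ⟨⟨t, rfl⟩, hx⟩
    rcases eq_one_or_eq_neg_one_of_map_onePlus_eq_one hβθ hx with ht | ht
    · exact ⟨t, 0, ht, by rw [zpow_zero, mul_one]⟩
    · obtain ⟨s, hs, hts⟩ := exists_onePlus_eq_of_map_eq_neg_one hι hβφ hθφ ht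
      exact ⟨s, -1, hs, hts⟩
  · rintro ⟨s, m, hs, rfl⟩
    exact ⟨⟨s * φ (ι ^ m), onePlus_mul_map_neg_one_zpow hι hθφ s m⟩,
      map_onePlus_mul_map_neg_one_zpow hβθ hβφ hs m⟩

end MonoidHom

lemma torusChar_torusCochar {n : ℕ} (k c : Fin n → ℤ) (z : ℂˣ) :
    torusChar k (torusCochar c z) = z ^ (∑ i, c i * k i) := by
  simp only [torusChar, torusCochar, MonoidHom.coe_mk, OneHom.coe_mk, ← zpow_mul]
  induction (Finset.univ : Finset (Fin n)) using Finset.induction with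
  | empty => simp
  | insert _ _ h ih => rw [Finset.prod_insert h, Finset.sum_insert h, ih, zpow_add]

theorem kernel_on_identity_component_eq_norms_times_cocharacter_general
    (n : ℕ) (θ : Torus n →* Torus n)
    (k c : Fin n → ℤ)
    (hβθ : ∀ t, torusChar k (θ t) = torusChar k t)
    (hθc : ∀ z : ℂˣ, θ (torusCochar c z) = torusCochar c z)
    (hpair : ∑ i, c i * k i = 2) :
    (∀ t : Torus n, torusChar k t = -1 →
      ∃ (s : Torus n) (m : ℤ), torusChar k s = 1 ∧
        t * θ t = (s * θ s) * (torusCochar c (-1)) ^ m) ∧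
    ({x : Torus n | (∃ t, x = t * θ t) ∧ torusChar k x = 1}
      = {x : Torus n | ∃ (s : Torus n) (m : ℤ),
          torusChar k s = 1 ∧ x = (s * θ s) * (torusCochar c (-1)) ^ m}) := by
  have hI : Units.mk0 Complex.I Complex.I_ne_zero ^ 2 = -1 := Units.ext Complex.I_sq
  have hβφ (z : ℂˣ) : torusChar k (torusCochar c z) = z ^ 2 := by
    rw [torusChar_torusCochar, hpair, zpow_two, sq]
  refine ⟨fun t ht => ?_, Set.ext fun x => MonoidHom.mem_range_onePlus_inf_ker_iff hI hβθ hβφ hθc x⟩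
  obtain ⟨s, hs, hts⟩ := MonoidHom.exists_onePlus_eq_of_map_eq_neg_one hI hβφ hθc ht
  exact ⟨s, -1, hs, hts⟩

/-- Let `θ` be an algebraic involution of `T = (ℂˣ)^n`, `β = torusChar k` a `θ`-fixed
character with `θ`-fixed coroot `β^∨ = torusCochar c`, `⟨β,β^∨⟩ = 2`.  Then:
(a) if `β(t) = −1` then `t·θ(t) ∈ (1+θ)(ker β)·⟨β^∨(−1)⟩`; consequently
(b) `ker(β|_{(T^θ)⁰}) = (1+θ)(ker β)·⟨β^∨(−1)⟩`, where `(T^θ)⁰ = (1+θ)T`. -/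
theorem kernel_on_identity_component_eq_norms_times_cocharacter
    (n : ℕ) (θ : Torus n →* Torus n) (hcont : Continuous θ) (hθ : ∀ t, θ (θ t) = t)
    (k c : Fin n → ℤ)
    (hβθ : ∀ t, torusChar k (θ t) = torusChar k t)
    (hθc : ∀ z : ℂˣ, θ (torusCochar c z) = torusCochar c z)
    (hpair : ∑ i, c i * k i = 2) :
    (∀ t : Torus n, torusChar k t = -1 →
      ∃ (s : Torus n) (m : ℤ), torusChar k s = 1 ∧
        t * θ t = (s * θ s) * (torusCochar c (-1)) ^ m) ∧
    ({x : Torus n | (∃ t, x = t * θ t) ∧ torusChar k x = 1}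
      = {x : Torus n | ∃ (s : Torus n) (m : ℤ),
          torusChar k s = 1 ∧ x = (s * θ s) * (torusCochar c (-1)) ^ m}) :=
  kernel_on_identity_component_eq_norms_times_cocharacter_general n θ k c hβθ hθc hpair
end

section
/- Let T be a complex algebraic torus with involution θ, let β be a θ-fixed character with θ-fixed coroot β^∨ and ⟨β,β^∨⟩ = 2, and suppose p : T^J → T is an isogeny of tori with finite central kernel J, with θ lifting to T^J and β, β^∨ lifting compatibly. Then (T^θ)^J = (ker(β|_{T^θ}))^J · β^∨(ℂˣ), where (·)^J denotes preimage under p and β^∨(ℂˣ) is the image in T^J of the lifted cocharacter. -/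
/-- Let `p : T^J → T` be an isogeny of complex tori (a surjective homomorphism with finite
central kernel `J`), `θ` an involution of `T` lifting to an involution `θJ` of `T^J`,
`β` a `θ`-fixed character of `T`, and `β^∨` a lifted `θJ`-fixed cocharacter of `T^J`
with `⟨β, β^∨⟩ = 2` (i.e. `β(p(β^∨(z))) = z²`).  Then
`(T^θ)^J = (ker(β|_{T^θ}))^J · β^∨(ℂˣ)`, where `(·)^J` denotes preimage under `p`:
an element `x ∈ T^J` satisfies `θ(p x) = p x` iff `x = s · β^∨(z)` with
`p s ∈ T^θ` and `β(p s) = 1`. -/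
theorem preimage_of_fixed_group_eq_kernel_times_cocharacter
    (TJ T : Type*) [CommGroup TJ] [CommGroup T]
    (p : TJ →* T) (hp : Function.Surjective p) (hker : Finite p.ker)
    (θ : T →* T) (hθ : ∀ t, θ (θ t) = t)
    (θJ : TJ →* TJ) (hθJ : ∀ x, θJ (θJ x) = x)
    (hlift : ∀ x, p (θJ x) = θ (p x))
    (β : T →* ℂˣ) (hβθ : ∀ t, β (θ t) = β t)
    (βv : ℂˣ →* TJ) (hβvθ : ∀ z, θJ (βv z) = βv z)
    (hpair : ∀ z : ℂˣ, β (p (βv z)) = z ^ 2) :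
    ∀ x : TJ, θ (p x) = p x ↔
      ∃ (s : TJ) (z : ℂˣ), θ (p s) = p s ∧ β (p s) = 1 ∧ x = s * βv z := by
  have hfix : ∀ z : ℂˣ, θ (p (βv z)) = p (βv z) := fun z => by
    rw [← hlift, hβvθ]
  intro x
  constructor
  · intro hx
    obtain ⟨w, hw⟩ := IsAlgClosed.exists_pow_nat_eq ((β (p x) : ℂ)) (n := 2) (by norm_num)
    have hwne : w ≠ 0 := by
      intro h; rw [h] at hw; simp at hw
      exact (β (p x)).ne_zero hw.symm
    set z : ℂˣ := Units.mk0 w hwne with hz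
    have hz2 : z ^ 2 = β (p x) := by
      ext; push_cast [hz]; exact hw
    refine ⟨x * (βv z)⁻¹, z, ?_, ?_, by group⟩
    · rw [map_mul, map_mul, map_inv, map_inv, hx, hfix]
    · rw [map_mul, map_mul, map_inv, map_inv, hpair, hz2, mul_inv_cancel]
  · rintro ⟨s, z, hs, -, rfl⟩
    rw [map_mul, map_mul, hs, hfix]
end
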